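/- arXiv:1907.06634 — 3 statements merged into one kernel-verified Lean document; each statement's English description precedes it below -/
import Mathlib

section
/- Let μ be a probability measure on [0,∞) (the law of the instantaneous SNR γ), let a > 0, b > 0, let 0 < H < b and ω ∈ ℝ, and assume ∫ x^{H} dμ(x) < ∞. Then the function t ↦ e^{(H+iω)t} · (1/Γ(b)) ∫ γ̂(b, a e^{−t} x) dμ(x) is Lebesgue integrable on ℝ and ∫_{−∞}^{∞} e^{(H+iω)t} ((1/Γ(b)) ∫ γ̂(b, a e^{−t} x) dμ(x)) dt = (∫ x^{H+iω} dμ(x)) · a^{H+iω} · Γ(b − (H+iω)) / (Γ(b) · (H+iω)), where γ̂(b, y) = ∫₀^y t^{b−1} e^{−t} dt is the lower incomplete Gamma function, Γ is the complex Gamma function, and complex powers of nonnegative reals are used. -/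
open MeasureTheory

noncomputable def lowerIncGamma (b y : ℝ) : ℝ :=
  ∫ t in (0 : ℝ)..y, t ^ (b - 1) * Real.exp (-t)

/-!
Expanding `γ̂(b, c e^{-t}) = ∫_{0 < v ≤ c e^{-t}} v^{b-1} e^{-v} dv`, the integral
`∫ e^{st} γ̂(b, c e^{-t}) dt` is a double integral over `{(v, t) : t ≤ log c - log v}`.
Integrating in `t` first gives `(c/v)^s / s` (this needs `0 < Re s`), which leaves
`c^s/s · ∫₀^∞ v^{b-s-1} e^{-v} dv = c^s Γ(b - s) / s` (this needs `Re s < b`).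
Averaging over the SNR is a second use of Fubini: by the real case, the `t`-integral of the
modulus at `x` is a constant times `x^{Re s}`, which is `μ`-integrable by the moment assumption.
-/

open Set Filter

lemma intervalIntegrable_rpow_mul_exp_neg {b : ℝ} (hb : 0 < b) (u y : ℝ) :
    IntervalIntegrable (fun t : ℝ => t ^ (b - 1) * Real.exp (-t)) volume u y :=
  (intervalIntegral.intervalIntegrable_rpow' (by linarith)).mul_continuousOn
    (Real.continuous_exp.comp continuous_neg).continuousOn

lemma continuous_lowerIncGamma {b : ℝ} (hb : 0 < b) : Continuous (lowerIncGamma b) :=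
  intervalIntegral.continuous_primitive (intervalIntegrable_rpow_mul_exp_neg hb) 0

lemma lowerIncGamma_nonneg (b : ℝ) {y : ℝ} (hy : 0 ≤ y) : 0 ≤ lowerIncGamma b y :=
  intervalIntegral.integral_nonneg hy fun _ ht =>
    mul_nonneg (Real.rpow_nonneg ht.1 _) (Real.exp_pos _).le

@[simp]
lemma lowerIncGamma_zero (b : ℝ) : lowerIncGamma b 0 = 0 :=
  intervalIntegral.integral_same

lemma lowerIncGamma_eq_integral_Ioc (b : ℝ) {y : ℝ} (hy : 0 ≤ y) :
    lowerIncGamma b y = ∫ t in Ioc 0 y, t ^ (b - 1) * Real.exp (-t) :=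
  intervalIntegral.integral_of_le hy

lemma le_mul_exp_neg_iff {c v : ℝ} (hc : 0 < c) (hv : 0 < v) (t : ℝ) :
    v ≤ c * Real.exp (-t) ↔ t ≤ Real.log c - Real.log v := by
  rw [← Real.log_le_log_iff hv (by positivity), Real.log_mul hc.ne' (Real.exp_pos _).ne',
    Real.log_exp]
  constructor <;> intro h <;> linarith

lemma cexp_mul_log_eq_cpow {x : ℝ} (hx : 0 < x) (s : ℂ) :
    Complex.exp (s * Real.log x) = (x : ℂ) ^ s := by
  rw [Complex.cpow_def_of_ne_zero (by exact_mod_cast hx.ne'), Complex.ofReal_log hx.le, mul_comm]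

noncomputable def lowerIncGammaLayer (b c : ℝ) (s : ℂ) : ℝ × ℝ → ℂ :=
  {q : ℝ × ℝ | q.1 ≤ c * Real.exp (-q.2)}.indicator
    fun q => Complex.exp (s * q.2) * ((q.1 ^ (b - 1) * Real.exp (-q.1) : ℝ) : ℂ)

section Layer

variable {b c : ℝ} {s : ℂ}

lemma lowerIncGammaLayer_fst (hc : 0 < c) {v : ℝ} (hv : 0 < v) (t : ℝ) :
    lowerIncGammaLayer b c s (v, t) =
      (Iic (Real.log c - Real.log v)).indicator
        (fun t => Complex.exp (s * t) * ((v ^ (b - 1) * Real.exp (-v) : ℝ) : ℂ)) t := by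
  simp only [lowerIncGammaLayer, indicator_apply, mem_ofPred_eq, mem_Iic,
    le_mul_exp_neg_iff hc hv]

lemma integral_lowerIncGammaLayer_fst (hc : 0 < c) {v : ℝ} (hv : 0 < v) (hs : 0 < s.re) :
    ∫ t, lowerIncGammaLayer b c s (v, t) =
      (c : ℂ) ^ s / s * (Real.exp (-v) * (v : ℂ) ^ ((b : ℂ) - s - 1)) := by
  simp_rw [lowerIncGammaLayer_fst hc hv]
  rw [integral_indicator measurableSet_Iic, integral_mul_const, integral_exp_mul_complex_Iic hs,
    Complex.ofReal_sub, mul_sub, Complex.exp_sub, cexp_mul_log_eq_cpow hc,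
    cexp_mul_log_eq_cpow hv, show (b : ℂ) - s - 1 = (b - 1) - s by ring,
    Complex.cpow_sub _ _ (by exact_mod_cast hv.ne')]
  push_cast [Complex.ofReal_cpow hv.le]
  ring

lemma integral_norm_lowerIncGammaLayer_fst (hc : 0 < c) {v : ℝ} (hv : 0 < v) (hs : 0 < s.re) :
    ∫ t, ‖lowerIncGammaLayer b c s (v, t)‖ =
      c ^ s.re / s.re * (Real.exp (-v) * v ^ (b - s.re - 1)) := by
  simp_rw [lowerIncGammaLayer_fst hc hv, norm_indicator_eq_indicator_norm, norm_mul,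
    Complex.norm_exp, Complex.re_mul_ofReal, Complex.norm_real, Real.norm_eq_abs]
  rw [integral_indicator measurableSet_Iic, integral_mul_const, integral_exp_mul_Iic hs, mul_sub,
    Real.exp_sub, mul_comm s.re, mul_comm s.re, ← Real.rpow_def_of_pos hc,
    ← Real.rpow_def_of_pos hv, show b - s.re - 1 = (b - 1) - s.re by ring,
    Real.rpow_sub hv (b - 1), abs_of_nonneg (by positivity)]
  ring

lemma integrable_lowerIncGammaLayer (hc : 0 < c) (hs0 : 0 < s.re) (hsb : s.re < b) :
    Integrable (lowerIncGammaLayer b c s) ((volume.restrict (Ioi 0)).prod volume) := by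
  have hmeas : AEStronglyMeasurable (lowerIncGammaLayer b c s)
      ((volume.restrict (Ioi 0)).prod volume) :=
    (Measurable.indicator (by fun_prop)
      (measurableSet_le (by fun_prop) (by fun_prop))).aestronglyMeasurable
  refine (integrable_prod_iff hmeas).2 ⟨?_, ?_⟩
  · filter_upwards [ae_restrict_mem measurableSet_Ioi] with v hv
    simp_rw [lowerIncGammaLayer_fst hc hv]
    rw [integrable_indicator_iff measurableSet_Iic]
    exact (integrableOn_exp_mul_complex_Iic hs0 _).mul_const _
  · refine ((Real.GammaIntegral_convergent (by linarith : 0 < b - s.re)).const_mul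
      (c ^ s.re / s.re)).congr ?_
    filter_upwards [ae_restrict_mem measurableSet_Ioi] with v hv
    rw [integral_norm_lowerIncGammaLayer_fst hc hv hs0]

lemma setIntegral_lowerIncGammaLayer_snd (hc : 0 ≤ c) (t : ℝ) :
    ∫ v in Ioi 0, lowerIncGammaLayer b c s (v, t) =
      Complex.exp (s * t) * lowerIncGamma b (c * Real.exp (-t)) := by
  have hsection : (fun v => lowerIncGammaLayer b c s (v, t)) =
      (Iic (c * Real.exp (-t))).indicator
        fun v => Complex.exp (s * t) * ((v ^ (b - 1) * Real.exp (-v) : ℝ) : ℂ) := by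
    ext v
    simp only [lowerIncGammaLayer, indicator_apply, mem_ofPred_eq, mem_Iic]
  rw [hsection, setIntegral_indicator measurableSet_Iic, Ioi_inter_Iic, integral_const_mul,
    integral_complex_ofReal, lowerIncGamma_eq_integral_Ioc b (by positivity)]

end Layer

theorem integral_cexp_mul_lowerIncGamma {b c : ℝ} (hc : 0 ≤ c) {s : ℂ} (hs0 : 0 < s.re)
    (hsb : s.re < b) :
    Integrable (fun t : ℝ => Complex.exp (s * t) * lowerIncGamma b (c * Real.exp (-t))) ∧
      ∫ t : ℝ, Complex.exp (s * t) * lowerIncGamma b (c * Real.exp (-t)) =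
        (c : ℂ) ^ s * Complex.Gamma (b - s) / s := by
  rcases hc.eq_or_lt with rfl | hc
  · have hs : s ≠ 0 := by rintro rfl; simp at hs0
    simp [Complex.zero_cpow hs]
  have hF := integrable_lowerIncGammaLayer hc hs0 hsb
  refine ⟨hF.swap.integral_prod_left.congr
    (Eventually.of_forall (setIntegral_lowerIncGammaLayer_snd hc.le)), ?_⟩
  calc ∫ t : ℝ, Complex.exp (s * t) * lowerIncGamma b (c * Real.exp (-t))
      = ∫ t : ℝ, ∫ v in Ioi 0, lowerIncGammaLayer b c s (v, t) := by
        simp_rw [setIntegral_lowerIncGammaLayer_snd hc.le]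
    _ = ∫ v in Ioi 0, ∫ t, lowerIncGammaLayer b c s (v, t) :=
        (integral_integral_swap (f := fun v t => lowerIncGammaLayer b c s (v, t)) hF).symm
    _ = ∫ v in Ioi 0, (c : ℂ) ^ s / s * (Real.exp (-v) * (v : ℂ) ^ ((b : ℂ) - s - 1)) :=
        setIntegral_congr_fun measurableSet_Ioi fun v hv =>
          integral_lowerIncGammaLayer_fst hc hv hs0
    _ = (c : ℂ) ^ s * Complex.Gamma (b - s) / s := by
        rw [integral_const_mul, Complex.Gamma_eq_integral (by simpa using hsb),
          Complex.GammaIntegral]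
        ring

lemma integral_norm_cexp_mul_lowerIncGamma {b c : ℝ} (hc : 0 ≤ c) {s : ℂ} (hs0 : 0 < s.re)
    (hsb : s.re < b) :
    ∫ t : ℝ, ‖Complex.exp (s * t) * lowerIncGamma b (c * Real.exp (-t))‖ =
      c ^ s.re * Real.Gamma (b - s.re) / s.re := by
  have hnorm : ∀ t : ℝ, ‖Complex.exp (s * t) * lowerIncGamma b (c * Real.exp (-t))‖ =
      Real.exp (s.re * t) * lowerIncGamma b (c * Real.exp (-t)) := fun t => by
    rw [norm_mul, Complex.norm_exp, Complex.re_mul_ofReal, Complex.norm_real, Real.norm_eq_abs,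
      abs_of_nonneg (lowerIncGamma_nonneg b (by positivity))]
  have hreal := (integral_cexp_mul_lowerIncGamma hc (s := s.re) (by simpa) (by simpa)).2
  simp only [← Complex.ofReal_mul, ← Complex.ofReal_exp, integral_complex_ofReal,
    ← Complex.ofReal_cpow hc, ← Complex.ofReal_sub, Complex.Gamma_ofReal] at hreal
  simp_rw [hnorm]
  exact_mod_cast hreal

theorem integral_cexp_mul_integral_lowerIncGamma {μ : Measure ℝ} [SFinite μ]
    (hμ : ∀ᵐ x ∂μ, 0 ≤ x) {b c : ℝ} (hc : 0 ≤ c) {s : ℂ} (hs0 : 0 < s.re) (hsb : s.re < b)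
    (hmom : Integrable (fun x : ℝ => x ^ s.re) μ) :
    Integrable (fun t : ℝ =>
        Complex.exp (s * t) * ((∫ x, lowerIncGamma b (c * Real.exp (-t) * x) ∂μ : ℝ) : ℂ)) ∧
      ∫ t : ℝ, Complex.exp (s * t) * ((∫ x, lowerIncGamma b (c * Real.exp (-t) * x) ∂μ : ℝ) : ℂ) =
        (∫ x, (x : ℂ) ^ s ∂μ) * (c : ℂ) ^ s * Complex.Gamma (b - s) / s := by
  set Φ : ℝ × ℝ → ℂ := fun q =>
    Complex.exp (s * q.2) * lowerIncGamma b (c * q.1 * Real.exp (-q.2))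
  have hΦ_meas : AEStronglyMeasurable Φ (μ.prod volume) := by
    have := continuous_lowerIncGamma (hs0.trans hsb)
    exact Continuous.aestronglyMeasurable (by fun_prop)
  have hΦ_section : ∀ᵐ x ∂μ, Integrable (fun t => Φ (x, t)) ∧
      ∫ t, Φ (x, t) = (x : ℂ) ^ s * ((c : ℂ) ^ s * Complex.Gamma (b - s) / s) := by
    filter_upwards [hμ] with x hx
    obtain ⟨hint, hval⟩ := integral_cexp_mul_lowerIncGamma (mul_nonneg hc hx) hs0 hsb
    refine ⟨hint, hval.trans ?_⟩
    rw [Complex.ofReal_mul, Complex.mul_cpow_ofReal_nonneg hc hx]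
    ring
  have hΦ : Integrable Φ (μ.prod volume) := by
    refine (integrable_prod_iff hΦ_meas).2 ⟨hΦ_section.mono fun x hx => hx.1, ?_⟩
    refine (hmom.const_mul (c ^ s.re * Real.Gamma (b - s.re) / s.re)).congr ?_
    filter_upwards [hμ] with x hx
    rw [integral_norm_cexp_mul_lowerIncGamma (mul_nonneg hc hx) hs0 hsb,
      Real.mul_rpow hc hx]
    ring
  have hΦ_avg : ∀ t : ℝ, ∫ x, Φ (x, t) ∂μ =
      Complex.exp (s * t) * ((∫ x, lowerIncGamma b (c * Real.exp (-t) * x) ∂μ : ℝ) : ℂ) := by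
    intro t
    simp_rw [Φ, mul_right_comm c, integral_const_mul, integral_complex_ofReal]
  refine ⟨hΦ.swap.integral_prod_left.congr (Eventually.of_forall hΦ_avg), ?_⟩
  simp_rw [← hΦ_avg]
  rw [← integral_integral_swap (f := fun x t => Φ (x, t)) hΦ,
    integral_congr_ae (hΦ_section.mono fun x hx => hx.2), integral_mul_const]
  ring

theorem lamperti_spectrum_average_channel_reliability_general
    (μ : Measure ℝ) [IsProbabilityMeasure μ] (hsupp : μ (Set.Iio 0) = 0)
    (a b : ℝ) (ha : 0 < a)
    (H ω : ℝ) (hH0 : 0 < H) (hHb : H < b)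
    (hmom : Integrable (fun x : ℝ => x ^ H) μ) :
    Integrable (fun t : ℝ =>
      Complex.exp (((H : ℂ) + (ω : ℂ) * Complex.I) * (t : ℂ)) *
        ((((1 / Real.Gamma b) * ∫ x, lowerIncGamma b (a * Real.exp (-t) * x) ∂μ : ℝ)) : ℂ))
    ∧ (∫ t : ℝ, Complex.exp (((H : ℂ) + (ω : ℂ) * Complex.I) * (t : ℂ)) *
          ((((1 / Real.Gamma b) * ∫ x, lowerIncGamma b (a * Real.exp (-t) * x) ∂μ : ℝ)) : ℂ))
      = (∫ x, (x : ℂ) ^ ((H : ℂ) + (ω : ℂ) * Complex.I) ∂μ)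
          * (a : ℂ) ^ ((H : ℂ) + (ω : ℂ) * Complex.I)
          * Complex.Gamma ((b : ℂ) - ((H : ℂ) + (ω : ℂ) * Complex.I))
          / (((Real.Gamma b : ℂ)) * ((H : ℂ) + (ω : ℂ) * Complex.I)) := by
  have hμ : ∀ᵐ x ∂μ, 0 ≤ x :=
    (measure_eq_zero_iff_ae_notMem.1 hsupp).mono fun _ hx => not_lt.1 hx
  obtain ⟨hint, hval⟩ := integral_cexp_mul_integral_lowerIncGamma hμ ha.le
    (s := (H : ℂ) + ω * Complex.I) (by simpa using hH0) (by simpa using hHb) (by simpa using hmom)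
  have hscale : ∀ t : ℝ, Complex.exp (((H : ℂ) + ω * Complex.I) * t) *
      (((1 / Real.Gamma b) * ∫ x, lowerIncGamma b (a * Real.exp (-t) * x) ∂μ : ℝ) : ℂ) =
      ((1 / Real.Gamma b : ℝ) : ℂ) * (Complex.exp (((H : ℂ) + ω * Complex.I) * t) *
        ((∫ x, lowerIncGamma b (a * Real.exp (-t) * x) ∂μ : ℝ) : ℂ)) :=
    fun t => by push_cast; ring
  simp_rw [hscale, integral_const_mul, hval]
  exact ⟨hint.const_mul _, by push_cast; field_simp⟩

/-- **Lamperti dilation spectrum of the average channel reliability.**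
For the law `μ` of a nonnegative SNR, parameters `a, b > 0`, `0 < H < b`,
`ω ∈ ℝ`, and moment condition `∫ x^H dμ < ∞`, the function
`t ↦ e^{(H+iω)t} · (1/Γ(b)) E[γ̂(b, a e^{−t} γ)]` is integrable on `ℝ` and its
integral equals `E[γ^{H+iω}] · a^{H+iω} Γ(b−(H+iω)) / (Γ(b)(H+iω))`. -/
theorem lamperti_spectrum_average_channel_reliability
    (μ : Measure ℝ) [IsProbabilityMeasure μ] (hsupp : μ (Set.Iio 0) = 0)
    (a b : ℝ) (ha : 0 < a) (hb : 0 < b)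
    (H ω : ℝ) (hH0 : 0 < H) (hHb : H < b)
    (hmom : Integrable (fun x : ℝ => x ^ H) μ) :
    Integrable (fun t : ℝ =>
      Complex.exp (((H : ℂ) + (ω : ℂ) * Complex.I) * (t : ℂ)) *
        ((((1 / Real.Gamma b) * ∫ x, lowerIncGamma b (a * Real.exp (-t) * x) ∂μ : ℝ)) : ℂ))
    ∧ (∫ t : ℝ, Complex.exp (((H : ℂ) + (ω : ℂ) * Complex.I) * (t : ℂ)) *
          ((((1 / Real.Gamma b) * ∫ x, lowerIncGamma b (a * Real.exp (-t) * x) ∂μ : ℝ)) : ℂ))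
      = (∫ x, (x : ℂ) ^ ((H : ℂ) + (ω : ℂ) * Complex.I) ∂μ)
          * (a : ℂ) ^ ((H : ℂ) + (ω : ℂ) * Complex.I)
          * Complex.Gamma ((b : ℂ) - ((H : ℂ) + (ω : ℂ) * Complex.I))
          / (((Real.Gamma b : ℂ)) * ((H : ℂ) + (ω : ℂ) * Complex.I)) :=
  lamperti_spectrum_average_channel_reliability_general μ hsupp a b ha H ω hH0 hHb hmom
end

section
/- Let μ be a probability measure on [0,∞) (the law of the instantaneous SNR γ), let C_th > 0 be a capacity threshold, and assume μ({e^{C_th} − 1}) = 0. Then the outage capacity satisfies μ({x ≥ 0 : log(1+x) ≤ C_th}) = 1 − (1/π) · ∫ Im(Log(1 − x/(e^{C_th} − 1))) dμ(x), where Log is the principal branch of the complex logarithm (imaginary part in (−π, π], equal to π on negative reals). In other words, C_out(γ̄; C_th) = 1 − (1/π)·Im{C_avg(−γ̄/(e^{C_th} − 1))}, where C_avg(−γ̄/r) denotes the analytic continuation E[Log(1 − γ/r)] of the average channel capacity. -/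
/-! With `r = e^{C_th} − 1 > 0`, `Im Log(1 − x/r)` is `π` for `x > r` and `0` for `x ≤ r`
(at `x = r` because `Complex.log 0 = 0`), so the integral is `π μ(r, ∞)`. Since
`log(1 + x) ≤ C_th ↔ x ≤ r` and `μ` lives on `[0, ∞)`, the outage probability is
`μ[0, r] = 1 − μ(r, ∞)`. -/

open MeasureTheory Real

namespace Complex

theorem log_ofReal_im (t : ℝ) : (log (t : ℂ)).im = (Set.Iio 0).indicator (fun _ => π) t := by
  rw [log_im]
  rcases lt_or_ge t 0 with ht | ht
  · rw [Set.indicator_of_mem (Set.mem_Iio.mpr ht), arg_ofReal_of_neg ht]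
  · rw [Set.indicator_of_notMem (Set.notMem_Iio.mpr ht), arg_ofReal_of_nonneg ht]

theorem log_one_sub_div_ofReal_im {r : ℝ} (hr : 0 < r) (x : ℝ) :
    (log (1 - (x : ℂ) / (r : ℂ))).im = (Set.Ioi r).indicator (fun _ => π) x := by
  have h : (1 - (x : ℂ) / (r : ℂ)) = ((1 - x / r : ℝ) : ℂ) := by push_cast; ring
  rw [h, log_ofReal_im]
  simp only [Set.indicator_apply, Set.mem_Iio, Set.mem_Ioi, sub_neg, one_lt_div hr]

end Complex

theorem integral_log_one_sub_div_im {μ : Measure ℝ} [IsFiniteMeasure μ] {r : ℝ} (hr : 0 < r) :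
    ∫ x, (Complex.log (1 - (x : ℂ) / (r : ℂ))).im ∂μ = π * μ.real (Set.Ioi r) := by
  simp_rw [Complex.log_one_sub_div_ofReal_im hr]
  rw [integral_indicator_const _ measurableSet_Ioi, smul_eq_mul, mul_comm]

theorem setOf_nonneg_log_one_add_le (c : ℝ) :
    {x : ℝ | 0 ≤ x ∧ Real.log (1 + x) ≤ c} = Set.Icc 0 (Real.exp c - 1) := by
  ext x
  refine and_congr_right fun hx => ?_
  rw [Real.log_le_iff_le_exp (by linarith), le_sub_iff_add_le', add_comm]

theorem measureReal_Icc_of_measure_Iio_eq_zero {μ : Measure ℝ} [IsProbabilityMeasure μ]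
    (hμ : μ (Set.Iio 0) = 0) (r : ℝ) : μ.real (Set.Icc 0 r) = 1 - μ.real (Set.Ioi r) := by
  have h : Set.Icc 0 r =ᵐ[μ] Set.Iic r := by
    rw [← Set.Ici_inter_Iic, ← Set.compl_Iio, ← Set.sdiff_eq_compl_inter]
    exact sdiff_null_ae_eq_self hμ
  rw [measureReal_congr h, ← Set.compl_Ioi, probReal_compl_eq_one_sub measurableSet_Ioi]

theorem outage_capacity_from_average_capacity_general
    (μ : Measure ℝ) [IsProbabilityMeasure μ] (hsupp : μ (Set.Iio 0) = 0)
    (Cth : ℝ) (hCth : 0 < Cth) :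
    (μ {x : ℝ | 0 ≤ x ∧ Real.log (1 + x) ≤ Cth}).toReal
      = 1 - (1 / π) *
          ∫ x, (Complex.log (1 - (x : ℂ) / ((Real.exp Cth - 1 : ℝ) : ℂ))).im ∂μ := by
  have hr : 0 < Real.exp Cth - 1 := sub_pos.mpr (Real.one_lt_exp_iff.mpr hCth)
  rw [setOf_nonneg_log_one_add_le, ← measureReal_def, measureReal_Icc_of_measure_Iio_eq_zero hsupp,
    integral_log_one_sub_div_im hr, one_div, inv_mul_cancel_left₀ Real.pi_ne_zero]

/-- **Outage capacity from the analytically continued average channel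
capacity.**  For the law `μ` of a nonnegative SNR, a capacity threshold
`C_th > 0` such that `e^{C_th} − 1` is not an atom of `μ`,
`C_out(γ̄; C_th) = P(log(1+γ) ≤ C_th)
  = 1 − (1/π) Im{ E[Log(1 − γ/(e^{C_th} − 1))] }`,
where `Log` is the principal branch of the complex logarithm. -/
theorem outage_capacity_from_average_capacity
    (μ : Measure ℝ) [IsProbabilityMeasure μ] (hsupp : μ (Set.Iio 0) = 0)
    (Cth : ℝ) (hCth : 0 < Cth) (hatom : μ {Real.exp Cth - 1} = 0) :
    (μ {x : ℝ | 0 ≤ x ∧ Real.log (1 + x) ≤ Cth}).toReal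
      = 1 - (1 / π) *
          ∫ x, (Complex.log (1 - (x : ℂ) / ((Real.exp Cth - 1 : ℝ) : ℂ))).im ∂μ :=
  outage_capacity_from_average_capacity_general μ hsupp Cth hCth
end

section
/- Let μ be a probability measure on [0,∞) (the law of the instantaneous SNR γ), and let H : ℝ → ℝ be differentiable on [0,∞) with continuous derivative H′ such that x ↦ H(x) is μ-integrable and r ↦ H′(r)·μ((r,∞)) is Lebesgue integrable on (0,∞). Then ∫ H(x) dμ(x) = H(0) + (1/π) · ∫₀^∞ H′(r) · (∫ Im(Log(1 − x/r)) dμ(x)) dr, where Log is the principal branch of the complex logarithm (imaginary part in (−π, π], equal to π on negative reals, and Log 0 := 0). In other words, any average performance measure H_avg(γ̄) = E[H(γ)] can be computed from the exact average channel capacity as H_avg(γ̄) = H(0) + (1/π)∫₀^∞ H′(r)·Im{C_avg(−γ̄/r)} dr (the channel-capacity–based performance analysis). -/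
/-!
Writing `H x = H 0 + ∫₀^∞ H'(r) 𝟙[r < x] dr` for `x ≥ 0` and exchanging the order of
integration (Fubini, licensed by the integrability of `H'(r) P(γ > r)`) gives the
layer-cake formula `E[H(γ)] = H 0 + ∫₀^∞ H'(r) P(γ > r) dr`. For `r > 0` the real number
`1 - x / r` is negative exactly when `x > r`, so `Im Log(1 - x / r) = π 𝟙[x > r]` and the inner
integral of the theorem is `π P(γ > r)`.
-/

open MeasureTheory Real Set

lemma im_log_one_sub_ofReal_div {r : ℝ} (hr : 0 < r) (x : ℝ) :
    (Complex.log (1 - (x : ℂ) / r)).im = (Ioi r).indicator (fun _ => π) x := by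
  have hcast : 1 - (x : ℂ) / r = ((1 - x / r : ℝ) : ℂ) := by push_cast; ring
  rw [hcast, Complex.log_im]
  by_cases hx : r < x
  · rw [Complex.arg_ofReal_of_neg (by rwa [sub_neg, one_lt_div hr]),
      indicator_of_mem (mem_Ioi.2 hx)]
  · rw [Complex.arg_ofReal_of_nonneg (by rw [sub_nonneg, div_le_one hr]; exact not_lt.mp hx),
      indicator_of_notMem (mt mem_Ioi.1 hx)]

lemma integral_im_log_one_sub_div (μ : Measure ℝ) {r : ℝ} (hr : 0 < r) :
    ∫ x, (Complex.log (1 - (x : ℂ) / r)).im ∂μ = π * μ.real (Ioi r) := by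
  simp_rw [im_log_one_sub_ofReal_div hr, integral_indicator_const _ measurableSet_Ioi,
    smul_eq_mul, mul_comm]

lemma integral_Ioo_eq_sub_of_hasDerivWithinAt_Ici {H H' : ℝ → ℝ} {a x : ℝ} (hax : a ≤ x)
    (hderiv : ∀ y ∈ Ici a, HasDerivWithinAt H (H' y) (Ici a) y)
    (hcont : ContinuousOn H' (Ici a)) :
    ∫ r in Ioo a x, H' r = H x - H a := by
  have hsub : Icc a x ⊆ Ici a := Icc_subset_Ici_self
  rw [← integral_Ioc_eq_integral_Ioo, ← intervalIntegral.integral_of_le hax]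
  refine intervalIntegral.integral_eq_sub_of_hasDeriv_right_of_le hax
    (fun y hy => (hderiv y (hsub hy)).continuousWithinAt.mono hsub)
    (fun y hy => (hderiv y hy.1.le).mono fun z hz => hy.1.le.trans (le_of_lt hz))
    (hcont.mono ?_).intervalIntegrable
  rwa [uIcc_of_le hax]

section LayerCake

variable {g : ℝ → ℝ}

lemma indicator_fst_lt_snd_apply (r x : ℝ) :
    {p : ℝ × ℝ | p.1 < p.2}.indicator (fun p => g p.1) (r, x)
      = (Ioi r).indicator (fun _ => g r) x := by
  simp [indicator_apply]

lemma integral_indicator_fst_lt_snd_right (μ : Measure ℝ) (r : ℝ) :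
    ∫ x, {p : ℝ × ℝ | p.1 < p.2}.indicator (fun p => g p.1) (r, x) ∂μ = g r * μ.real (Ioi r) := by
  simp_rw [indicator_fst_lt_snd_apply, integral_indicator_const _ measurableSet_Ioi, smul_eq_mul,
    mul_comm]

lemma setIntegral_indicator_fst_lt_snd_left (a x : ℝ) :
    ∫ r in Ioi a, {p : ℝ × ℝ | p.1 < p.2}.indicator (fun p => g p.1) (r, x)
      = ∫ r in Ioo a x, g r := by
  have hfiber : (fun r => {p : ℝ × ℝ | p.1 < p.2}.indicator (fun p => g p.1) (r, x))
      = (Iio x).indicator g := by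
    ext r; simp [indicator_apply]
  rw [hfiber, integral_indicator measurableSet_Iio, Measure.restrict_restrict measurableSet_Iio,
    Iio_inter_Ioi]

lemma integrable_indicator_fst_lt_snd {ν μ : Measure ℝ} [SFinite ν] [IsFiniteMeasure μ]
    (hg : AEStronglyMeasurable g ν) (hint : Integrable (fun r => g r * μ.real (Ioi r)) ν) :
    Integrable ({p : ℝ × ℝ | p.1 < p.2}.indicator fun p => g p.1) (ν.prod μ) := by
  have hmeas : AEStronglyMeasurable
      ({p : ℝ × ℝ | p.1 < p.2}.indicator fun p => g p.1) (ν.prod μ) :=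
    hg.comp_fst.indicator (measurableSet_lt measurable_fst measurable_snd)
  refine (integrable_prod_iff hmeas).2 ⟨ae_of_all _ fun r => ?_, ?_⟩
  · simp_rw [indicator_fst_lt_snd_apply]
    exact (integrable_const _).indicator measurableSet_Ioi
  · convert hint.norm using 2 with r
    simp_rw [indicator_fst_lt_snd_apply, norm_indicator_eq_indicator_norm,
      integral_indicator_const _ measurableSet_Ioi, norm_mul,
      Real.norm_of_nonneg measureReal_nonneg, smul_eq_mul, mul_comm]

theorem integral_eq_add_integral_deriv_mul_measureReal_Ioi (μ : Measure ℝ) [IsFiniteMeasure μ]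
    {a : ℝ} (hμ : ∀ᵐ x ∂μ, a ≤ x) {H H' : ℝ → ℝ}
    (hderiv : ∀ x ∈ Ici a, HasDerivWithinAt H (H' x) (Ici a) x)
    (hcont : ContinuousOn H' (Ici a))
    (hint : IntegrableOn (fun r => H' r * μ.real (Ioi r)) (Ioi a)) :
    ∫ x, H x ∂μ = μ.real univ * H a + ∫ r in Ioi a, H' r * μ.real (Ioi r) := by
  set F := {p : ℝ × ℝ | p.1 < p.2}.indicator fun p => H' p.1
  have hF : Integrable F ((volume.restrict (Ioi a)).prod μ) :=
    integrable_indicator_fst_lt_snd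
      ((hcont.mono Ioi_subset_Ici_self).aestronglyMeasurable measurableSet_Ioi) hint
  calc ∫ x, H x ∂μ = ∫ x, (H a + ∫ r in Ioi a, F (r, x)) ∂μ := by
        refine integral_congr_ae (hμ.mono fun x hx => ?_)
        simp only [F]
        rw [setIntegral_indicator_fst_lt_snd_left,
          integral_Ioo_eq_sub_of_hasDerivWithinAt_Ici hx hderiv hcont, add_sub_cancel]
    _ = μ.real univ * H a + ∫ x, (∫ r in Ioi a, F (r, x)) ∂μ := by
        rw [integral_add (integrable_const _) hF.integral_prod_right, integral_const, smul_eq_mul]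
    _ = μ.real univ * H a + ∫ r in Ioi a, H' r * μ.real (Ioi r) := by
        rw [← integral_integral_swap (f := fun r x => F (r, x)) hF]
        simp_rw [F, integral_indicator_fst_lt_snd_right]

end LayerCake

theorem cc_based_performance_analysis_general
    (μ : Measure ℝ) [IsProbabilityMeasure μ] (hsupp : μ (Set.Iio 0) = 0)
    (H H' : ℝ → ℝ)
    (hderiv : ∀ x ∈ Set.Ici (0 : ℝ), HasDerivWithinAt H (H' x) (Set.Ici 0) x)
    (hcont : ContinuousOn H' (Set.Ici 0))
    (hH'int : IntegrableOn (fun r : ℝ => H' r * (μ (Set.Ioi r)).toReal)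
      (Set.Ioi 0)) :
    (∫ x, H x ∂μ)
      = H 0 + (1 / π) *
          ∫ r in Set.Ioi (0 : ℝ),
            H' r * ∫ x, (Complex.log (1 - (x : ℂ) / (r : ℂ))).im ∂μ := by
  have hnonneg : ∀ᵐ x ∂μ, 0 ≤ x :=
    ae_iff.2 (by simpa only [not_le, Iio_def] using hsupp)
  have hinner : ∫ r in Ioi (0 : ℝ), H' r * ∫ x, (Complex.log (1 - (x : ℂ) / r)).im ∂μ
      = π * ∫ r in Ioi (0 : ℝ), H' r * μ.real (Ioi r) := by
    rw [← integral_const_mul]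
    refine setIntegral_congr_fun measurableSet_Ioi fun r hr => ?_
    rw [integral_im_log_one_sub_div μ hr]
    ring
  rw [integral_eq_add_integral_deriv_mul_measureReal_Ioi μ hnonneg hderiv hcont hH'int,
    probReal_univ, one_mul, hinner, one_div, inv_mul_cancel_left₀ pi_ne_zero]

/-- **Channel-capacity–based performance analysis.**
For the law `μ` of a nonnegative SNR and a performance measure `H`
differentiable on `[0,∞)` with continuous derivative `H'`, with `H`
μ-integrable and `r ↦ H'(r)·P(γ > r)` Lebesgue integrable on `(0,∞)`,
the average performance measure satisfies
`E[H(γ)] = H(0) + (1/π) ∫₀^∞ H'(r) Im{ E[Log(1 − γ/r)] } dr`,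
where `Log` is the principal branch of the complex logarithm. -/
theorem cc_based_performance_analysis
    (μ : Measure ℝ) [IsProbabilityMeasure μ] (hsupp : μ (Set.Iio 0) = 0)
    (H H' : ℝ → ℝ)
    (hderiv : ∀ x ∈ Set.Ici (0 : ℝ), HasDerivWithinAt H (H' x) (Set.Ici 0) x)
    (hcont : ContinuousOn H' (Set.Ici 0))
    (hHint : Integrable H μ)
    (hH'int : IntegrableOn (fun r : ℝ => H' r * (μ (Set.Ioi r)).toReal)
      (Set.Ioi 0)) :
    (∫ x, H x ∂μ)
      = H 0 + (1 / π) *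
          ∫ r in Set.Ioi (0 : ℝ),
            H' r * ∫ x, (Complex.log (1 - (x : ℂ) / (r : ℂ))).im ∂μ :=
  cc_based_performance_analysis_general μ hsupp H H' hderiv hcont hH'int
end
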